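/- Let r ≥ 0 and β > -1. The orthogonal projection π_N^{0,β,0} of f(t) = t^r onto span{t^{β/2}(log t)^j : 0 ≤ j ≤ N} in L²(0,1) satisfies ‖t^r − π_N^{0,β,0} t^r‖_{L²(0,1)} ≤ √(2(β+1)N) · |(2r−β)/(2r+β+2)|^N for all sufficiently large N. -/

import Mathlib

/-!
Substituting `t = exp (-x / (β + 1))` sends `S_n^{(0,β,0)}(t)` to `e^{-βx/(2(β+1))} L_n(x)`, so
`∫₀¹ S_n S_m dt = (β + 1)⁻¹ ∫₀^∞ e^{-x} L_n L_m dx = δ_{nm} / (β + 1)`, and `∫₀¹ t^r S_n dt` becomes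
a Laplace transform of `L_n`, equal to `(r - β/2)^n / (r + β/2 + 1)^{n+1}`. Bessel's identity then
gives the squared error exactly as a geometric tail, `‖t^r - π_N t^r‖² = ρ^{2(N+1)} / (2r + 1)` with
`ρ = (2r - β) / (2r + β + 2)` and `|ρ| ≤ 1`; this is below the claimed bound once `2(β + 1)N ≥ 1`.
-/

open MeasureTheory Real Set

/-- Generalized Laguerre polynomials via the three-term recurrence. -/
noncomputable def lag (α : ℝ) : ℕ → ℝ → ℝ
  | 0, _ => 1
  | 1, y => -y + α + 1
  | n+2, y => ((2*((n:ℝ)+1)+α+1-y) * lag α (n+1) y - ((n:ℝ)+1+α) * lag α n y) / ((n:ℝ)+2)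

/-- Log orthogonal functions `S_n^{(α,β)}(t) = L_n^{(α)}(-(β+1) log t)`. -/
noncomputable def LOF (α β : ℝ) (n : ℕ) (t : ℝ) : ℝ :=
  lag α n (-(β+1) * Real.log t)

/-- Generalized log orthogonal functions `S_n^{(α,β,λ)}(t) = t^{(β-λ)/2} S_n^{(α,β)}(t)`. -/
noncomputable def GLOF (α β lam : ℝ) (n : ℕ) (t : ℝ) : ℝ :=
  t ^ ((β - lam)/2) * LOF α β n t

/-- Orthogonal projection onto `span{S_n^{(0,β,0)} : n ≤ N}` in `L²(0,1)`. -/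
noncomputable def glofProj0 (β : ℝ) (N : ℕ) (f : ℝ → ℝ) : ℝ → ℝ :=
  fun t => ∑ n ∈ Finset.range (N+1),
    ((β + 1) * ∫ x in Set.Ioo (0:ℝ) 1, f x * GLOF 0 β 0 n x) * GLOF 0 β 0 n t

open scoped Nat

theorem sum_neg_one_pow_mul_choose_mul_choose (n j : ℕ) :
    ∑ k ∈ Finset.range (n + 1), (-1 : ℤ) ^ k * n.choose k * k.choose j
      = if j = n then (-1) ^ n else 0 := by
  -- The left side is `(-1)^n` times the `n`-th forward difference of `x ↦ x.choose j` at `0`.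
  have h := fwdDiff_iter_eq_sum_shift (1 : ℕ) (fun x ↦ x.choose j : ℕ → ℤ) n 0
  simp only [fwdDiff_iter_choose_zero, smul_eq_mul, zero_add, mul_one] at h
  calc ∑ k ∈ Finset.range (n + 1), (-1 : ℤ) ^ k * n.choose k * k.choose j
      = (-1) ^ n * ∑ k ∈ Finset.range (n + 1), (-1 : ℤ) ^ (n - k) * n.choose k * k.choose j := by
        rw [Finset.mul_sum]
        refine Finset.sum_congr rfl fun k hk ↦ ?_
        obtain ⟨d, rfl⟩ := Nat.exists_eq_add_of_le (Nat.lt_succ_iff.mp (Finset.mem_range.mp hk))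
        have hd : (-1 : ℤ) ^ d * (-1) ^ d = 1 := by rw [← mul_pow]; norm_num
        rw [Nat.add_sub_cancel_left, pow_add]
        linear_combination (-(-1 : ℤ) ^ k * (k + d).choose k * k.choose j) * hd
    _ = if j = n then (-1) ^ n else 0 := by
        rw [← h]
        by_cases hjn : j = n <;> simp [hjn, Ne.symm]

theorem choose_add_eq_sum_choose_mul_choose {k N : ℕ} (l : ℕ) (hk : k ≤ N) :
    ((k + l).choose k : ℤ) = ∑ j ∈ Finset.range (N + 1), (k.choose j : ℤ) * l.choose j := by
  have hsupp : ∀ j ∈ Finset.range (N + 1), j ∉ Finset.range (k + 1) →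
      (k.choose j : ℤ) * l.choose j = 0 := fun j _ hj ↦ by
    rw [Nat.choose_eq_zero_of_lt (by simpa using hj), Nat.cast_zero, zero_mul]
  rw [← Finset.sum_subset (Finset.range_subset_range.mpr (by omega)) hsupp,
    ← Finset.sum_range_reflect, Nat.add_choose_eq, Finset.Nat.sum_antidiagonal_eq_sum_range_succ_mk]
  push_cast
  refine Finset.sum_congr rfl fun i hi ↦ ?_
  rw [Nat.choose_symm (by simpa [Nat.lt_succ_iff] using hi)]

theorem sum_sum_neg_one_pow_mul_choose_mul_choose_add (n m : ℕ) :
    ∑ k ∈ Finset.range (n + 1), ∑ l ∈ Finset.range (m + 1),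
      (-1 : ℤ) ^ (k + l) * n.choose k * m.choose l * (k + l).choose k
      = if n = m then 1 else 0 := by
  calc ∑ k ∈ Finset.range (n + 1), ∑ l ∈ Finset.range (m + 1),
        (-1 : ℤ) ^ (k + l) * n.choose k * m.choose l * (k + l).choose k
      = ∑ k ∈ Finset.range (n + 1), ∑ l ∈ Finset.range (m + 1), ∑ j ∈ Finset.range (n + 1),
          ((-1 : ℤ) ^ k * n.choose k * k.choose j) * ((-1) ^ l * m.choose l * l.choose j) := by
        refine Finset.sum_congr rfl fun k hk ↦ Finset.sum_congr rfl fun l _ ↦ ?_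
        rw [choose_add_eq_sum_choose_mul_choose l (Nat.lt_succ_iff.mp (Finset.mem_range.mp hk)),
          Finset.mul_sum]
        exact Finset.sum_congr rfl fun j _ ↦ by ring
    _ = ∑ j ∈ Finset.range (n + 1),
          (∑ k ∈ Finset.range (n + 1), (-1 : ℤ) ^ k * n.choose k * k.choose j) *
            ∑ l ∈ Finset.range (m + 1), (-1 : ℤ) ^ l * m.choose l * l.choose j := by
        simp_rw [Finset.sum_mul_sum]
        exact (Finset.sum_congr rfl fun k _ ↦ Finset.sum_comm).trans Finset.sum_comm
    _ = if n = m then 1 else 0 := by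
        simp_rw [sum_neg_one_pow_mul_choose_mul_choose]
        by_cases hnm : n = m
        · subst hnm; simp [← mul_pow]
        · simp [hnm, Ne.symm hnm]

noncomputable def laguerreCoeff (n k : ℕ) : ℝ := (-1) ^ k * n.choose k / k !

theorem laguerreCoeff_zero (n : ℕ) : laguerreCoeff n 0 = 1 := by
  simp [laguerreCoeff]

theorem laguerreCoeff_recurrence (n j : ℕ) :
    (n + 2 : ℝ) * laguerreCoeff (n + 2) (j + 1) = (2 * n + 3) * laguerreCoeff (n + 1) (j + 1)
      - laguerreCoeff (n + 1) j - (n + 1) * laguerreCoeff n (j + 1) := by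
  have h₁ : ((n + 1) * n.choose j : ℝ) = (n + 1).choose (j + 1) * (j + 1) := by
    exact_mod_cast Nat.add_one_mul_choose_eq n j
  have h₂ : ((n + 2) * (n + 1).choose j : ℝ) = (n + 2).choose (j + 1) * (j + 1) := by
    exact_mod_cast Nat.add_one_mul_choose_eq (n + 1) j
  have h₃ : ((n + 1).choose (j + 1) : ℝ) = n.choose j + n.choose (j + 1) := by
    exact_mod_cast Nat.choose_succ_succ' n j
  have h₄ : ((n + 2).choose (j + 1) : ℝ) = (n + 1).choose j + (n + 1).choose (j + 1) := by
    exact_mod_cast Nat.choose_succ_succ' (n + 1) j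
  simp only [laguerreCoeff, pow_succ, Nat.factorial_succ, Nat.cast_mul, Nat.cast_succ]
  field_simp
  linear_combination h₁ - h₂ + (n + 1 : ℝ) * h₃ - (n + j + 3 : ℝ) * h₄

section LaguerrePoly

open Polynomial

noncomputable def laguerrePoly (n : ℕ) : ℝ[X] :=
  ∑ k ∈ Finset.range (n + 1), monomial k (laguerreCoeff n k)

theorem coeff_laguerrePoly (n k : ℕ) : (laguerrePoly n).coeff k = laguerreCoeff n k := by
  rw [laguerrePoly, finsetSum_coeff]
  simp only [coeff_monomial, Finset.sum_ite_eq', Finset.mem_range]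
  split_ifs with hk
  · rfl
  · simp [laguerreCoeff, Nat.choose_eq_zero_of_lt (by omega : n < k)]

theorem laguerrePoly_recurrence (n : ℕ) :
    C ((n : ℝ) + 2) * laguerrePoly (n + 2)
      = (C (2 * (n : ℝ) + 3) - X) * laguerrePoly (n + 1) - C ((n : ℝ) + 1) * laguerrePoly n := by
  ext (_ | j)
  · simp only [mul_coeff_zero, coeff_sub, coeff_C_zero, coeff_X_zero, coeff_laguerrePoly,
      laguerreCoeff_zero]
    ring
  · simp only [coeff_C_mul, coeff_sub, sub_mul, coeff_X_mul, coeff_laguerrePoly]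
    exact laguerreCoeff_recurrence n j

theorem lag_zero_eq_eval (n : ℕ) (y : ℝ) : lag 0 n y = (laguerrePoly n).eval y := by
  induction n using Nat.twoStepInduction with
  | zero => simp [lag, laguerrePoly, laguerreCoeff]
  | one =>
    simp [lag, laguerrePoly, laguerreCoeff, Finset.sum_range_succ, neg_add_eq_sub, add_comm]
  | more n ih₀ ih₁ =>
    have h := congrArg (eval y) (laguerrePoly_recurrence n)
    simp only [eval_mul, eval_sub, eval_C, eval_X] at h
    rw [lag, ih₀, ih₁, div_eq_iff (by positivity)]
    linear_combination -h

theorem lag_zero_eq_sum (n : ℕ) (y : ℝ) :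
    lag 0 n y = ∑ k ∈ Finset.range (n + 1), laguerreCoeff n k * y ^ k := by
  simp [lag_zero_eq_eval, laguerrePoly, eval_finsetSum]

end LaguerrePoly

theorem integral_pow_mul_exp_neg_mul_Ioi {s : ℝ} (hs : 0 < s) (k : ℕ) :
    ∫ x in Ioi 0, x ^ k * exp (-(s * x)) = k ! / s ^ (k + 1) := by
  have h := integral_rpow_mul_exp_neg_mul_Ioi (a := k + 1) (by positivity) hs
  simp only [add_sub_cancel_right, rpow_natCast, Real.Gamma_nat_eq_factorial] at h
  rw [h, ← Nat.cast_succ, rpow_natCast, div_pow, one_pow, one_div_mul_eq_div]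

theorem integrableOn_pow_mul_exp_neg_mul_Ioi {s : ℝ} (hs : 0 < s) (k : ℕ) :
    IntegrableOn (fun x ↦ x ^ k * exp (-(s * x))) (Ioi 0) := by
  refine .of_integral_ne_zero ?_
  rw [integral_pow_mul_exp_neg_mul_Ioi hs]
  positivity

theorem integrableOn_sum_mul_exp_neg_mul_Ioi {ι : Type*} (S : Finset ι) (a : ι → ℝ) (d : ι → ℕ)
    {s : ℝ} (hs : 0 < s) :
    IntegrableOn (fun x ↦ (∑ i ∈ S, a i * x ^ d i) * exp (-(s * x))) (Ioi 0) := by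
  simp_rw [Finset.sum_mul, mul_assoc]
  exact integrable_finsetSum _ fun i _ ↦ (integrableOn_pow_mul_exp_neg_mul_Ioi hs _).const_mul _

theorem integral_sum_mul_exp_neg_mul_Ioi {ι : Type*} (S : Finset ι) (a : ι → ℝ) (d : ι → ℕ)
    {s : ℝ} (hs : 0 < s) :
    ∫ x in Ioi 0, (∑ i ∈ S, a i * x ^ d i) * exp (-(s * x))
      = ∑ i ∈ S, a i * (d i)! / s ^ (d i + 1) := by
  simp_rw [Finset.sum_mul, mul_assoc]
  rw [integral_finsetSum _ fun i _ ↦ (integrableOn_pow_mul_exp_neg_mul_Ioi hs _).const_mul _]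
  simp_rw [integral_const_mul, integral_pow_mul_exp_neg_mul_Ioi hs, mul_div_assoc]

theorem integral_lag_mul_exp_neg_mul_Ioi {s : ℝ} (hs : 0 < s) (n : ℕ) :
    ∫ x in Ioi 0, lag 0 n x * exp (-(s * x)) = (s - 1) ^ n / s ^ (n + 1) := by
  simp_rw [lag_zero_eq_sum]
  rw [integral_sum_mul_exp_neg_mul_Ioi _ _ (fun k ↦ k) hs, sub_eq_neg_add, add_pow, Finset.sum_div]
  refine Finset.sum_congr rfl fun k hk ↦ ?_
  have hkn : k ≤ n := Nat.lt_succ_iff.mp (Finset.mem_range.mp hk)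
  rw [laguerreCoeff, show n + 1 = n - k + (k + 1) by omega]
  field_simp
  ring

theorem integrableOn_lag_mul_exp_neg_mul_Ioi {s : ℝ} (hs : 0 < s) (n : ℕ) :
    IntegrableOn (fun x ↦ lag 0 n x * exp (-(s * x))) (Ioi 0) := by
  simp_rw [lag_zero_eq_sum]
  exact integrableOn_sum_mul_exp_neg_mul_Ioi _ _ (fun k ↦ k) hs

theorem lag_mul_lag_eq_sum (n m : ℕ) (x : ℝ) :
    lag 0 n x * lag 0 m x = ∑ p ∈ Finset.range (n + 1) ×ˢ Finset.range (m + 1),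
      laguerreCoeff n p.1 * laguerreCoeff m p.2 * x ^ (p.1 + p.2) := by
  rw [lag_zero_eq_sum, lag_zero_eq_sum, Finset.sum_mul_sum, Finset.sum_product]
  exact Finset.sum_congr rfl fun k _ ↦ Finset.sum_congr rfl fun l _ ↦ by ring

theorem integrableOn_lag_mul_lag_mul_exp_neg_mul_Ioi {s : ℝ} (hs : 0 < s) (n m : ℕ) :
    IntegrableOn (fun x ↦ lag 0 n x * lag 0 m x * exp (-(s * x))) (Ioi 0) := by
  have h := integrableOn_sum_mul_exp_neg_mul_Ioi (Finset.range (n + 1) ×ˢ Finset.range (m + 1))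
    (fun p ↦ laguerreCoeff n p.1 * laguerreCoeff m p.2) (fun p ↦ p.1 + p.2) hs
  simp_rw [lag_mul_lag_eq_sum]
  exact h

theorem integral_lag_mul_lag_mul_exp_neg_Ioi (n m : ℕ) :
    ∫ x in Ioi 0, lag 0 n x * lag 0 m x * exp (-x) = if n = m then 1 else 0 := by
  have hsum := integral_sum_mul_exp_neg_mul_Ioi (Finset.range (n + 1) ×ˢ Finset.range (m + 1))
    (fun p ↦ laguerreCoeff n p.1 * laguerreCoeff m p.2) (fun p ↦ p.1 + p.2) one_pos
  simp only [one_mul, one_pow, div_one] at hsum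
  simp_rw [lag_mul_lag_eq_sum]
  rw [hsum, Finset.sum_product]
  have h := sum_sum_neg_one_pow_mul_choose_mul_choose_add n m
  rw [← Int.cast_inj (α := ℝ)] at h
  push_cast at h
  rw [← h]
  refine Finset.sum_congr rfl fun k _ ↦ Finset.sum_congr rfl fun l _ ↦ ?_
  rw [laguerreCoeff, laguerreCoeff, ← Nat.add_choose_mul_factorial_mul_factorial,
    Nat.choose_symm_add]
  push_cast
  field_simp
  ring

section Substitution

variable {E : Type*} [NormedAddCommGroup E] [NormedSpace ℝ E] {a : ℝ}

theorem image_exp_neg_mul_Ioi (ha : 0 < a) : (fun x ↦ exp (-(a * x))) '' Ioi 0 = Ioo 0 1 := by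
  ext t
  constructor
  · rintro ⟨x, hx, rfl⟩
    exact ⟨exp_pos _, Real.exp_lt_one_iff.mpr (neg_lt_zero.mpr (mul_pos ha hx))⟩
  · rintro ⟨ht₀, ht₁⟩
    refine ⟨-log t / a, div_pos (neg_pos.mpr (log_neg ht₀ ht₁)) ha, ?_⟩
    dsimp only
    rw [mul_div_cancel₀ _ ha.ne', neg_neg, exp_log ht₀]

theorem hasDerivAt_exp_neg_mul (a x : ℝ) :
    HasDerivAt (fun x ↦ exp (-(a * x))) (-(a * exp (-(a * x)))) x := by
  convert ((hasDerivAt_mul_const a).neg.exp) using 1 <;> simp [mul_comm]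

theorem injective_exp_neg_mul {a : ℝ} (ha : a ≠ 0) : Function.Injective fun x ↦ exp (-(a * x)) :=
  fun x y h ↦ by simpa [ha] using exp_injective h

theorem integral_Ioo_zero_one_eq_integral_Ioi (ha : 0 < a) (g : ℝ → E) :
    ∫ t in Ioo 0 1, g t = ∫ x in Ioi 0, (a * exp (-(a * x))) • g (exp (-(a * x))) := by
  rw [← image_exp_neg_mul_Ioi ha, integral_image_eq_integral_abs_deriv_smul measurableSet_Ioi
    (fun x _ ↦ (hasDerivAt_exp_neg_mul a x).hasDerivWithinAt) (injective_exp_neg_mul ha.ne').injOn]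
  simp only [abs_neg, abs_of_pos (mul_pos ha (exp_pos _))]

theorem integrableOn_Ioo_zero_one_iff (ha : 0 < a) (g : ℝ → E) :
    IntegrableOn g (Ioo 0 1) ↔
      IntegrableOn (fun x ↦ (a * exp (-(a * x))) • g (exp (-(a * x)))) (Ioi 0) := by
  rw [← image_exp_neg_mul_Ioi ha, integrableOn_image_iff_integrableOn_abs_deriv_smul
    measurableSet_Ioi (fun x _ ↦ (hasDerivAt_exp_neg_mul a x).hasDerivWithinAt)
    (injective_exp_neg_mul ha.ne').injOn]
  simp only [abs_neg, abs_of_pos (mul_pos ha (exp_pos _))]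

end Substitution

theorem smul_rpow_sq_exp_neg (r x : ℝ) :
    (1 * exp (-(1 * x))) • (exp (-(1 * x)) ^ r) ^ 2 = exp (-(2 * r + 1) * x) := by
  rw [← exp_mul, ← exp_nat_mul, smul_eq_mul, one_mul, ← exp_add]
  congr 1
  push_cast
  ring

theorem integral_rpow_sq {r : ℝ} (hr : -1 < 2 * r) :
    ∫ t in Ioo (0 : ℝ) 1, (t ^ r) ^ 2 = 1 / (2 * r + 1) := by
  rw [integral_Ioo_zero_one_eq_integral_Ioi one_pos]
  simp_rw [smul_rpow_sq_exp_neg]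
  rw [integral_exp_mul_Ioi (by linarith), mul_zero, exp_zero]
  field_simp

theorem integrableOn_rpow_sq {r : ℝ} (hr : -1 < 2 * r) :
    IntegrableOn (fun t : ℝ ↦ (t ^ r) ^ 2) (Ioo 0 1) := by
  rw [integrableOn_Ioo_zero_one_iff one_pos]
  simp_rw [smul_rpow_sq_exp_neg]
  exact integrableOn_exp_mul_Ioi (by linarith) 0

theorem integral_sq_sub_sum_of_orthogonal {α ι : Type*} [MeasurableSpace α] [DecidableEq ι]
    {μ : Measure α} {f : α → ℝ} {e : ι → α → ℝ} {σ : ℝ} (s : Finset ι) (c : ι → ℝ)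
    (hf : Integrable (fun x ↦ f x ^ 2) μ) (hfe : ∀ i, Integrable (fun x ↦ f x * e i x) μ)
    (hee : ∀ i j, Integrable (fun x ↦ e i x * e j x) μ)
    (horth : ∀ i j, ∫ x, e i x * e j x ∂μ = if i = j then σ else 0) :
    ∫ x, (f x - ∑ i ∈ s, c i * e i x) ^ 2 ∂μ
      = ∫ x, f x ^ 2 ∂μ - ∑ i ∈ s, (2 * c i * ∫ x, f x * e i x ∂μ - σ * c i ^ 2) := by
  have hexpand : ∀ x, (f x - ∑ i ∈ s, c i * e i x) ^ 2 = f x ^ 2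
      - ∑ i ∈ s, 2 * c i * (f x * e i x)
      + ∑ i ∈ s, ∑ j ∈ s, c i * c j * (e i x * e j x) := by
    intro x
    have hcross : 2 * f x * ∑ i ∈ s, c i * e i x = ∑ i ∈ s, 2 * c i * (f x * e i x) := by
      rw [Finset.mul_sum]
      exact Finset.sum_congr rfl fun i _ ↦ by ring
    have hsq : (∑ i ∈ s, c i * e i x) ^ 2 = ∑ i ∈ s, ∑ j ∈ s, c i * c j * (e i x * e j x) := by
      rw [sq, Finset.sum_mul_sum]
      exact Finset.sum_congr rfl fun i _ ↦ Finset.sum_congr rfl fun j _ ↦ by ring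
    rw [sub_sq, hcross, hsq]
  have hcross : Integrable (fun x ↦ ∑ i ∈ s, 2 * c i * (f x * e i x)) μ :=
    integrable_finsetSum _ fun i _ ↦ (hfe i).const_mul _
  have hsq : ∀ i, Integrable (fun x ↦ ∑ j ∈ s, c i * c j * (e i x * e j x)) μ :=
    fun i ↦ integrable_finsetSum _ fun j _ ↦ (hee i j).const_mul _
  have hdiff : Integrable (fun x ↦ f x ^ 2 - ∑ i ∈ s, 2 * c i * (f x * e i x)) μ := hf.sub hcross
  simp_rw [hexpand]
  rw [integral_add hdiff (integrable_finsetSum _ fun i _ ↦ hsq i),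
    integral_sub hf hcross, integral_finsetSum _ fun i _ ↦ (hfe i).const_mul _,
    integral_finsetSum _ fun i _ ↦ hsq i]
  simp_rw [integral_finsetSum _ fun j _ ↦ (hee _ j).const_mul _, integral_const_mul, horth]
  simp only [mul_ite, mul_zero, Finset.sum_ite_eq]
  rw [Finset.sum_congr rfl fun i hi ↦ if_pos hi, Finset.sum_sub_distrib,
    Finset.sum_congr rfl fun i _ ↦ (by ring : c i * c i * σ = σ * c i ^ 2)]
  ring

theorem one_div_sub_mul_sum_sq_pow_div_pow {a c u v : ℝ} (ha : a ≠ 0) (hv : v ≠ 0)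
    (h : v ^ 2 - u ^ 2 = c * a) (N : ℕ) :
    1 / a - c * ∑ n ∈ Finset.range N, (u ^ n / v ^ (n + 1)) ^ 2 = ((u / v) ^ 2) ^ N / a := by
  induction N with
  | zero => simp
  | succ N ih =>
    rw [Finset.sum_range_succ, mul_add, ← sub_sub, ih]
    simp only [div_pow, ← pow_mul]
    field_simp
    linear_combination v ^ (2 * N) * v ^ (2 * (N + 1)) * u ^ (2 * N) * h

section GLOF

variable {β : ℝ}

theorem GLOF_zero_exp_neg (hβ : β + 1 ≠ 0) (n : ℕ) (x : ℝ) :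
    GLOF 0 β 0 n (exp (-((β + 1)⁻¹ * x))) = exp (-(β / 2 * (β + 1)⁻¹ * x)) * lag 0 n x := by
  rw [GLOF, LOF, log_exp, ← exp_mul]
  congr 2
  · ring
  · field_simp

theorem smul_rpow_mul_GLOF_exp_neg (hβ : β + 1 ≠ 0) (r : ℝ) (n : ℕ) (x : ℝ) :
    ((β + 1)⁻¹ * exp (-((β + 1)⁻¹ * x))) •
        (exp (-((β + 1)⁻¹ * x)) ^ r * GLOF 0 β 0 n (exp (-((β + 1)⁻¹ * x))))
      = (β + 1)⁻¹ * (lag 0 n x * exp (-((β + 1)⁻¹ * (r + β / 2 + 1) * x))) := by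
  rw [GLOF_zero_exp_neg hβ, ← exp_mul, smul_eq_mul, show -((β + 1)⁻¹ * (r + β / 2 + 1) * x)
    = -((β + 1)⁻¹ * x) + -((β + 1)⁻¹ * x) * r + -(β / 2 * (β + 1)⁻¹ * x) by ring, exp_add, exp_add]
  ring

theorem smul_GLOF_mul_GLOF_exp_neg (hβ : β + 1 ≠ 0) (n m : ℕ) (x : ℝ) :
    ((β + 1)⁻¹ * exp (-((β + 1)⁻¹ * x))) •
        (GLOF 0 β 0 n (exp (-((β + 1)⁻¹ * x))) * GLOF 0 β 0 m (exp (-((β + 1)⁻¹ * x))))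
      = (β + 1)⁻¹ * (lag 0 n x * lag 0 m x * exp (-x)) := by
  rw [GLOF_zero_exp_neg hβ, GLOF_zero_exp_neg hβ, smul_eq_mul, show -x
    = -((β + 1)⁻¹ * x) + -(β / 2 * (β + 1)⁻¹ * x) + -(β / 2 * (β + 1)⁻¹ * x) by field_simp; ring,
    exp_add, exp_add]
  ring

theorem integral_rpow_mul_GLOF {r : ℝ} (hβ : -1 < β) (hr : -1 < r + β / 2) (n : ℕ) :
    ∫ t in Ioo 0 1, t ^ r * GLOF 0 β 0 n t = (r - β / 2) ^ n / (r + β / 2 + 1) ^ (n + 1) := by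
  have hc : 0 < β + 1 := by linarith
  have hs : 0 < (β + 1)⁻¹ * (r + β / 2 + 1) := mul_pos (inv_pos.mpr hc) (by linarith)
  rw [integral_Ioo_zero_one_eq_integral_Ioi (inv_pos.mpr hc)]
  simp_rw [smul_rpow_mul_GLOF_exp_neg hc.ne']
  rw [integral_const_mul, integral_lag_mul_exp_neg_mul_Ioi hs,
    show (β + 1)⁻¹ * (r + β / 2 + 1) - 1 = (β + 1)⁻¹ * (r - β / 2) by field_simp; ring,
    mul_pow, mul_pow, pow_succ (β + 1)⁻¹]
  field_simp

theorem integrableOn_rpow_mul_GLOF {r : ℝ} (hβ : -1 < β) (hr : -1 < r + β / 2) (n : ℕ) :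
    IntegrableOn (fun t ↦ t ^ r * GLOF 0 β 0 n t) (Ioo 0 1) := by
  have hc : 0 < β + 1 := by linarith
  have hs : 0 < (β + 1)⁻¹ * (r + β / 2 + 1) := mul_pos (inv_pos.mpr hc) (by linarith)
  rw [integrableOn_Ioo_zero_one_iff (inv_pos.mpr hc)]
  simp_rw [smul_rpow_mul_GLOF_exp_neg hc.ne']
  exact (integrableOn_lag_mul_exp_neg_mul_Ioi hs n).const_mul _

theorem integral_GLOF_mul_GLOF (hβ : -1 < β) (n m : ℕ) :
    ∫ t in Ioo 0 1, GLOF 0 β 0 n t * GLOF 0 β 0 m t = if n = m then (β + 1)⁻¹ else 0 := by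
  have hc : 0 < β + 1 := by linarith
  rw [integral_Ioo_zero_one_eq_integral_Ioi (inv_pos.mpr hc)]
  simp_rw [smul_GLOF_mul_GLOF_exp_neg hc.ne']
  rw [integral_const_mul, integral_lag_mul_lag_mul_exp_neg_Ioi, mul_ite, mul_one, mul_zero]

theorem integrableOn_GLOF_mul_GLOF (hβ : -1 < β) (n m : ℕ) :
    IntegrableOn (fun t ↦ GLOF 0 β 0 n t * GLOF 0 β 0 m t) (Ioo 0 1) := by
  have hc : 0 < β + 1 := by linarith
  rw [integrableOn_Ioo_zero_one_iff (inv_pos.mpr hc)]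
  simp_rw [smul_GLOF_mul_GLOF_exp_neg hc.ne']
  have h := integrableOn_lag_mul_lag_mul_exp_neg_mul_Ioi one_pos n m
  simp only [one_mul] at h
  exact h.const_mul _

end GLOF

theorem integral_sq_sub_glofProj0_rpow {r β : ℝ} (hr : -1 < 2 * r) (hβ : -1 < β) (N : ℕ) :
    ∫ t in Ioo 0 1, (t ^ r - glofProj0 β N (fun x ↦ x ^ r) t) ^ 2
      = (((2 * r - β) / (2 * r + β + 2)) ^ 2) ^ (N + 1) / (2 * r + 1) := by
  have hc : 0 < β + 1 := by linarith
  have hq : -1 < r + β / 2 := by linarith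
  unfold glofProj0
  rw [integral_sq_sub_sum_of_orthogonal _ _ (integrableOn_rpow_sq hr)
    (integrableOn_rpow_mul_GLOF hβ hq) (integrableOn_GLOF_mul_GLOF hβ) (integral_GLOF_mul_GLOF hβ),
    integral_rpow_sq hr]
  simp_rw [integral_rpow_mul_GLOF hβ hq]
  have hterm : ∀ b : ℝ, 2 * ((β + 1) * b) * b - (β + 1)⁻¹ * ((β + 1) * b) ^ 2 = (β + 1) * b ^ 2 :=
    fun b ↦ by field_simp; ring
  rw [Finset.sum_congr rfl fun n _ ↦ hterm _, ← Finset.mul_sum,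
    one_div_sub_mul_sum_sq_pow_div_pow (by linarith) (by linarith) (by ring),
    show (2 * r - β) / (2 * r + β + 2) = (r - β / 2) / (r + β / 2 + 1) by
      rw [div_eq_div_iff (by linarith) (by linarith)]; ring]

/-- Exponential `L²` convergence of the GLOF projection for `f(t) = t^r`. -/
theorem glof_projection_power_L2 (r β : ℝ) (hr : 0 ≤ r) (hβ : -1 < β) :
    ∃ N₀ : ℕ, ∀ N ≥ N₀,
      Real.sqrt (∫ t in Set.Ioo (0:ℝ) 1,
          (t ^ r - glofProj0 β N (fun x => x ^ r) t)^2)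
        ≤ Real.sqrt (2*(β + 1)*(N:ℝ)) * |(2*r - β)/(2*r + β + 2)| ^ N := by
  set ρ := (2 * r - β) / (2 * r + β + 2)
  have hρ : ρ ^ 2 ≤ 1 := by
    rw [sq_le_one_iff_abs_le_one, abs_div, abs_of_pos (by linarith : 0 < 2 * r + β + 2),
      div_le_one (by linarith), abs_le]
    constructor <;> linarith
  obtain ⟨N₀, hN₀⟩ := exists_nat_ge (2 * (β + 1))⁻¹
  refine ⟨N₀, fun N hN ↦ ?_⟩
  have hone : 1 ≤ 2 * (β + 1) * N := by
    rw [← inv_mul_le_iff₀ (by linarith), mul_one]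
    exact hN₀.trans (Nat.cast_le.mpr hN)
  rw [integral_sq_sub_glofProj0_rpow (by linarith) hβ]
  calc √((ρ ^ 2) ^ (N + 1) / (2 * r + 1))
      ≤ √((ρ ^ 2) ^ N) := sqrt_le_sqrt <| (div_le_self (by positivity) (by linarith)).trans
          (pow_le_pow_of_le_one (sq_nonneg ρ) hρ N.le_succ)
    _ = |ρ| ^ N := by rw [← pow_mul, pow_mul', sqrt_sq_eq_abs, abs_pow]
    _ ≤ √(2 * (β + 1) * N) * |ρ| ^ N := le_mul_of_one_le_left (by positivity) (one_le_sqrt.mpr hone)
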